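/- Let X be a k-dimensional complex and suppose that for every (k−2)-face F and every vector w ⊥ 1 in C⁰(lk F), |⟨A(lk F) w, w⟩| ≤ h·⟨w,w⟩. Then for every z ∈ C^{k−1}(X;R) orthogonal (standard inner product) to B^{k−1}(X;R), |⟨A_{k−1}(X) z, z⟩| ≤ k·h·⟨z,z⟩. -/

import Mathlib

/-- Signed incidence number `[F : G]`. -/
def incSign {n : ℕ} (F G : Finset (Fin n)) : ℤ :=
  if G ⊆ F ∧ F.card = G.card + 1 then
    ∑ v ∈ F \ G, (-1 : ℤ) ^ (G.filter (fun x => x < v)).card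
  else 0

/-- The `(k−1)`-faces of a `k`-dimensional complex with set `K` of `k`-faces. -/
abbrev Faces (n k : ℕ) (K : Finset (Finset (Fin n))) :=
  {G : Finset (Fin n) // G.card = k ∧ ∃ H ∈ K, G ⊆ H}

/-- The vertices of the link of a `(k−2)`-face `F`. -/
abbrev LinkVerts (n : ℕ) (K : Finset (Finset (Fin n))) (F : Finset (Fin n)) :=
  {u : Fin n // u ∉ F ∧ ∃ H ∈ K, insert u F ⊆ H}


/-!
Split the quadratic form of `A_{k-1}` according to the `(k-2)`-face `F = G ∩ G'` shared by the two
faces of each nonzero entry. The part belonging to `F` is the quadratic form of the link adjacency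
`A(lk F)` evaluated at the localisation `z_F(u) = [F ∪ {u} : F] z(F ∪ {u})`, and `z ⊥ B^{k-1}`
says exactly that every `z_F` is orthogonal to `1`. Each `(k-1)`-face contains `k` faces of
dimension `k-2` and the signs square to one, so `∑_F ⟨z_F, z_F⟩ = k ⟨z, z⟩`.
-/

open Finset Matrix

section
variable {n k : ℕ} {K : Finset (Finset (Fin n))} {F : Finset (Fin n)}

lemma incSign_insert_self {u : Fin n} (hu : u ∉ F) :
    incSign (insert u F) F = (-1) ^ #{x ∈ F | x < u} := by
  have hsdiff : insert u F \ F = {u} := by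
    rw [insert_sdiff_of_notMem _ hu, sdiff_self, bot_eq_empty, insert_empty]
  rw [incSign, if_pos ⟨subset_insert u F, card_insert_of_notMem hu⟩, hsdiff, sum_singleton]

lemma incSign_insert_self_sq {u : Fin n} (hu : u ∉ F) :
    ((incSign (insert u F) F : ℤ) : ℝ) ^ 2 = 1 := by
  rw [incSign_insert_self hu, Int.cast_pow, Int.cast_neg, Int.cast_one, pow_right_comm,
    neg_one_sq, one_pow]

lemma incSign_eq_zero_of_not_subset {G : Finset (Fin n)} (h : ¬F ⊆ G) : incSign G F = 0 :=
  if_neg fun hG => h hG.1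

def Faces.ofLink (hF : #F + 1 = k) (u : LinkVerts n K F) : Faces n k K :=
  ⟨insert u.1 F, by rw [card_insert_of_notMem u.2.1, hF], u.2.2⟩

@[simp]
lemma Faces.coe_ofLink (hF : #F + 1 = k) (u : LinkVerts n K F) :
    (Faces.ofLink hF u).1 = insert u.1 F :=
  rfl

lemma Faces.ofLink_injective (hF : #F + 1 = k) :
    Function.Injective (Faces.ofLink (K := K) hF) := fun u _ huv =>
  Subtype.ext <| (insert_inj u.2.1).mp (congrArg Subtype.val huv)

lemma Faces.image_ofLink (hF : #F + 1 = k) :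
    univ.image (Faces.ofLink (K := K) hF) = univ.filter fun G : Faces n k K => F ⊆ G.1 := by
  ext G
  simp only [mem_image, mem_univ, true_and, mem_filter]
  constructor
  · rintro ⟨u, rfl⟩
    exact subset_insert u.1 F
  · intro hFG
    obtain ⟨u, huF, hGu⟩ := exists_eq_insert_iff.mpr ⟨hFG, by rw [hF, G.2.1]⟩
    obtain ⟨H, hHK, hGH⟩ := G.2.2
    exact ⟨⟨u, huF, H, hHK, hGu ▸ hGH⟩, Subtype.ext hGu⟩

lemma sum_ofLink {M : Type*} [AddCommMonoid M] (hF : #F + 1 = k) (f : Faces n k K → M) :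
    ∑ u, f (Faces.ofLink hF u) = ∑ G with F ⊆ G.1, f G := by
  rw [← Faces.image_ofLink hF, sum_image fun _ _ _ _ huv => Faces.ofLink_injective hF huv]

/-- The localisation `z_F` of `z` at `F`; it is set to `0` when `#F + 1 ≠ k`. -/
noncomputable def localCochain (z : Faces n k K → ℝ) (F : Finset (Fin n))
    (u : LinkVerts n K F) : ℝ :=
  if hc : #(insert u.1 F) = k then
    ((incSign (insert u.1 F) F : ℤ) : ℝ) * z ⟨insert u.1 F, hc, u.2.2⟩ else 0

lemma localCochain_eq (hF : #F + 1 = k) (z : Faces n k K → ℝ) (u : LinkVerts n K F) :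
    localCochain z F u = ((incSign (insert u.1 F) F : ℤ) : ℝ) * z (Faces.ofLink hF u) :=
  dif_pos (Faces.ofLink hF u).2.1

lemma sum_localCochain (hF : #F + 1 = k) (z : Faces n k K → ℝ) :
    ∑ u, localCochain z F u = ∑ G, z G * (incSign G.1 F : ℝ) := by
  simp_rw [localCochain_eq hF]
  refine (sum_ofLink hF fun G => ((incSign G.1 F : ℤ) : ℝ) * z G).trans <|
    (sum_filter_of_ne fun G _ hG => ?_).trans (sum_congr rfl fun G _ => mul_comm _ _)
  by_contra hFG
  simp [incSign_eq_zero_of_not_subset hFG] at hG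

lemma sum_localCochain_sq (hF : #F + 1 = k) (z : Faces n k K → ℝ) :
    ∑ u, localCochain z F u ^ 2 = ∑ G with F ⊆ G.1, z G ^ 2 := by
  refine .trans (sum_congr rfl fun u _ => ?_) (sum_ofLink hF fun G => z G ^ 2)
  rw [localCochain_eq hF, mul_pow, incSign_insert_self_sq u.2.1, one_mul]

lemma card_add_one_of_mem_powersetCard_pred {α : Type*} {s F : Finset α} (hk : 1 ≤ k)
    (hF : F ∈ powersetCard (k - 1) s) : #F + 1 = k := by
  rw [(mem_powersetCard.mp hF).2]
  omega

lemma card_filter_powersetCard_pred_subset {α : Type*} [Fintype α] [DecidableEq α]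
    {G : Finset α} (hk : 1 ≤ k) (hG : #G = k) :
    #{F ∈ powersetCard (k - 1) univ | F ⊆ G} = k := by
  have hfilter :
      {F ∈ powersetCard (k - 1) (univ : Finset α) | F ⊆ G} = powersetCard (k - 1) G := by
    ext F
    simp only [mem_filter, mem_powersetCard, subset_univ, true_and, and_comm]
  rw [hfilter, card_powersetCard, hG, ← Nat.choose_symm (Nat.sub_le k 1),
    Nat.sub_sub_self hk, Nat.choose_one_right]

lemma sum_sum_localCochain_sq (hk : 1 ≤ k) (z : Faces n k K → ℝ) :
    ∑ F ∈ powersetCard (k - 1) univ, ∑ u, localCochain z F u ^ 2 = k * ∑ G, z G ^ 2 := by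
  rw [sum_congr rfl fun F (hF : F ∈ powersetCard (k - 1) univ) =>
    (sum_localCochain_sq (card_add_one_of_mem_powersetCard_pred hk hF) z).trans (sum_filter _ _),
    sum_comm, mul_sum]
  refine sum_congr rfl fun G _ => ?_
  rw [← sum_filter, sum_const, card_filter_powersetCard_pred_subset hk G.2.1, nsmul_eq_mul]

variable (A : Matrix (Faces n k K) (Faces n k K) ℝ) (z : Faces n k K → ℝ)

/-- `⟨ρ_F A ρ_F z, z⟩` in the notation of the paper, when `A` vanishes on the diagonal. -/
def localQuadForm (F : Finset (Fin n)) : ℝ :=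
  ∑ G, ∑ G', if G.1 ∩ G'.1 = F then A G G' * z G' * z G else 0

lemma quadForm_eq_sum_localQuadForm (hA : ∀ G G', A G G' ≠ 0 → #(G.1 ∩ G'.1) = k - 1) :
    ∑ G, (A *ᵥ z) G * z G = ∑ F ∈ powersetCard (k - 1) univ, localQuadForm A z F := by
  have hpair : ∀ G G', A G G' * z G' * z G = ∑ F ∈ powersetCard (k - 1) univ,
      if G.1 ∩ G'.1 = F then A G G' * z G' * z G else 0 := by
    intro G G'
    rw [sum_ite_eq]
    split_ifs with hmem
    · rfl
    · have hA0 : A G G' = 0 := by_contra fun hne =>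
        hmem (mem_powersetCard.mpr ⟨subset_univ _, hA G G' hne⟩)
      rw [hA0, zero_mul, zero_mul]
  calc ∑ G, (A *ᵥ z) G * z G = ∑ G, ∑ G', A G G' * z G' * z G := by
        simp only [mulVec, dotProduct, sum_mul]
    _ = ∑ G, ∑ G', ∑ F ∈ powersetCard (k - 1) univ,
          if G.1 ∩ G'.1 = F then A G G' * z G' * z G else 0 :=
        Fintype.sum_congr _ _ fun G => Fintype.sum_congr _ _ fun G' => hpair G G'
    _ = ∑ F ∈ powersetCard (k - 1) univ, localQuadForm A z F :=
        (sum_congr rfl fun _ _ => sum_comm).trans sum_comm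

lemma localQuadForm_eq_sum_ofLink (hF : #F + 1 = k) :
    localQuadForm A z F = ∑ u, ∑ v, if insert u.1 F ∩ insert v.1 F = F then
      A (Faces.ofLink hF u) (Faces.ofLink hF v) * z (Faces.ofLink hF v) * z (Faces.ofLink hF u)
      else 0 := by
  have hsupp : ∀ G G' : Faces n k K,
      (if G.1 ∩ G'.1 = F then A G G' * z G' * z G else 0) ≠ 0 → F ⊆ G.1 ∧ F ⊆ G'.1 := by
    intro G G' h
    have hGG' : G.1 ∩ G'.1 = F := by_contra fun hne => h (if_neg hne)
    exact hGG' ▸ ⟨inter_subset_left, inter_subset_right⟩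
  unfold localQuadForm
  rw [← sum_filter_of_ne (p := fun G : Faces n k K => F ⊆ G.1), ← sum_ofLink hF]
  · refine sum_congr rfl fun u _ => ?_
    rw [← sum_filter_of_ne (p := fun G' : Faces n k K => F ⊆ G'.1), ← sum_ofLink hF]
    · rfl
    · exact fun G' _ h => (hsupp _ G' h).2
  · intro G _ h
    obtain ⟨G', -, hG'⟩ := exists_ne_zero_of_sum_ne_zero h
    exact (hsupp G G' hG').1

lemma insert_inter_insert_of_ne {α : Type*} [DecidableEq α] {s : Finset α} {a b : α}
    (ha : a ∉ s) (hb : b ∉ s) (hab : a ≠ b) : insert a s ∩ insert b s = s := by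
  rw [insert_inter_of_notMem (mem_insert.not.mpr (not_or.mpr ⟨hab, ha⟩)),
    inter_insert_of_notMem hb, inter_self]

variable (hA : ∀ G G', A G G' = if G.1 ≠ G'.1 ∧ #(G.1 ∩ G'.1) = k - 1 ∧ G.1 ∪ G'.1 ∈ K
    then ((incSign G.1 (G.1 ∩ G'.1) * incSign G'.1 (G.1 ∩ G'.1) : ℤ) : ℝ) else 0)
  (AF : Matrix (LinkVerts n K F) (LinkVerts n K F) ℝ)
  (hAF : ∀ u v : LinkVerts n K F, AF u v =
    if u ≠ v ∧ insert u.1 (insert v.1 F) ∈ K then (1 : ℝ) else 0)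
include hA hAF

lemma localQuadForm_term_ofLink (hF : #F + 1 = k) (u v : LinkVerts n K F) :
    (if insert u.1 F ∩ insert v.1 F = F then
      A (Faces.ofLink hF u) (Faces.ofLink hF v) * z (Faces.ofLink hF v) * z (Faces.ofLink hF u)
      else 0) = AF u v * localCochain z F v * localCochain z F u := by
  rw [hAF, localCochain_eq hF, localCochain_eq hF]
  obtain rfl | huv := eq_or_ne u v
  · rw [inter_self, if_neg (insert_ne_self.mpr u.2.1),
      if_neg fun h => h.1 rfl, zero_mul, zero_mul]
  have hinter := insert_inter_insert_of_ne u.2.1 v.2.1 (Subtype.coe_ne_coe.mpr huv)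
  have hunion : insert u.1 F ∪ insert v.1 F = insert u.1 (insert v.1 F) := by
    rw [insert_union, union_insert, union_self]
  have hne : insert u.1 F ≠ insert v.1 F := fun h =>
    huv (Faces.ofLink_injective hF (Subtype.ext h))
  have hcard : #F = k - 1 := by omega
  rw [if_pos hinter, hA]
  simp only [Faces.coe_ofLink, hinter, hunion, hcard, ne_eq, hne, huv, not_false_eq_true, true_and]
  split_ifs
  · push_cast
    ring
  · ring

lemma localQuadForm_eq_link (hF : #F + 1 = k) :
    localQuadForm A z F = ∑ u, (AF *ᵥ localCochain z F) u * localCochain z F u := by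
  simp only [localQuadForm_eq_sum_ofLink A z hF, localQuadForm_term_ofLink A z hA AF hAF hF,
    mulVec, dotProduct, sum_mul]

end

theorem stmt13_general (n k : ℕ) (hk : 2 ≤ k)
    (K : Finset (Finset (Fin n)))
    (A : Matrix (Faces n k K) (Faces n k K) ℝ)
    (hA : ∀ G G', A G G' = if G.1 ≠ G'.1 ∧ (G.1 ∩ G'.1).card = k - 1 ∧ G.1 ∪ G'.1 ∈ K
        then ((incSign G.1 (G.1 ∩ G'.1) * incSign G'.1 (G.1 ∩ G'.1) : ℤ) : ℝ) else 0)
    (Alk : ∀ F : Finset (Fin n), Matrix (LinkVerts n K F) (LinkVerts n K F) ℝ)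
    (hAlk : ∀ F (u v : LinkVerts n K F), Alk F u v =
        if u ≠ v ∧ insert u.1 (insert v.1 F) ∈ K then (1 : ℝ) else 0)
    (h : ℝ)
    (hlink : ∀ F : Finset (Fin n), F.card = k - 1 →
      ∀ w : LinkVerts n K F → ℝ, (∑ u, w u = 0) →
        |∑ u, ((Alk F).mulVec w) u * w u| ≤ h * ∑ u, w u ^ 2) :
    ∀ z : Faces n k K → ℝ,
      (∀ F' : Finset (Fin n), F'.card = k - 1 →
        ∑ G : Faces n k K, z G * (incSign G.1 F' : ℝ) = 0) →
      |∑ G, (A.mulVec z) G * z G| ≤ k * h * ∑ G, z G ^ 2 := by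
  intro z hz
  have hk₁ : 1 ≤ k := by omega
  have hsupp : ∀ G G', A G G' ≠ 0 → #(G.1 ∩ G'.1) = k - 1 := fun G G' hne =>
    (ite_ne_right_iff.mp (hA G G' ▸ hne)).1.2.1
  rw [quadForm_eq_sum_localQuadForm A z hsupp]
  calc |∑ F ∈ powersetCard (k - 1) univ, localQuadForm A z F|
      ≤ ∑ F ∈ powersetCard (k - 1) univ, |localQuadForm A z F| := abs_sum_le_sum_abs _ _
    _ ≤ ∑ F ∈ powersetCard (k - 1) univ, h * ∑ u, localCochain z F u ^ 2 :=
        sum_le_sum fun F hF => by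
          have hcard := (mem_powersetCard.mp hF).2
          have hF' := card_add_one_of_mem_powersetCard_pred hk₁ hF
          rw [localQuadForm_eq_link A z hA (Alk F) (hAlk F) hF']
          exact hlink F hcard _ ((sum_localCochain hF' z).trans (hz F hcard))
    _ = k * h * ∑ G, z G ^ 2 := by
        rw [← mul_sum, sum_sum_localCochain_sq hk₁ z]
        ring

/-- If for every `(k−2)`-face `F` and every `w ⊥ 1` in `C⁰(lk F)` we have
`|⟨A(lk F) w, w⟩| ≤ h·⟨w,w⟩`, then for every `z` orthogonal (standard inner product) to
`B^{k−1}(X;ℝ)` we have `|⟨A_{k−1}(X) z, z⟩| ≤ k·h·⟨z,z⟩`. -/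
theorem stmt13 (n k : ℕ) (hk : 2 ≤ k)
    (K : Finset (Finset (Fin n))) (hK : ∀ H ∈ K, H.card = k + 1)
    (A : Matrix (Faces n k K) (Faces n k K) ℝ)
    (hA : ∀ G G', A G G' = if G.1 ≠ G'.1 ∧ (G.1 ∩ G'.1).card = k - 1 ∧ G.1 ∪ G'.1 ∈ K
        then ((incSign G.1 (G.1 ∩ G'.1) * incSign G'.1 (G.1 ∩ G'.1) : ℤ) : ℝ) else 0)
    (Alk : ∀ F : Finset (Fin n), Matrix (LinkVerts n K F) (LinkVerts n K F) ℝ)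
    (hAlk : ∀ F (u v : LinkVerts n K F), Alk F u v =
        if u ≠ v ∧ insert u.1 (insert v.1 F) ∈ K then (1 : ℝ) else 0)
    (h : ℝ)
    (hlink : ∀ F : Finset (Fin n), F.card = k - 1 →
      ∀ w : LinkVerts n K F → ℝ, (∑ u, w u = 0) →
        |∑ u, ((Alk F).mulVec w) u * w u| ≤ h * ∑ u, w u ^ 2) :
    ∀ z : Faces n k K → ℝ,
      (∀ F' : Finset (Fin n), F'.card = k - 1 →
        ∑ G : Faces n k K, z G * (incSign G.1 F' : ℝ) = 0) →
      |∑ G, (A.mulVec z) G * z G| ≤ k * h * ∑ G, z G ^ 2 :=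
  stmt13_general n k hk K A hA Alk hAlk h hlink
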